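/- Let ζ = 54^{1/2} · 72^{1/4} · 108^{1/6} · 216^{1/12} and g = (log₂ 9, log₂ 9, log₂ 6, log₂ ζ, log₂ 54, log₂ 54, log₂ 216) ∈ ℝ^7. Then g cannot be written as a nonnegative linear combination of any proper subset of {e_1, e_2, e_3, e_{12}, e_{123'}}; in particular g is not a nonnegative linear combination of e_1, e_2, e_3, e_{123'} alone (it violates h_1 + h_2 = h_{12}). -/

import Mathlib

open Finset

/-- Probability that the discrete random variable `X` (on finite sample space `Fin N`
with probability mass function `p`) takes the value `a`. -/
noncomputable def pr {N : ℕ} (p : Fin N → ℝ) {A : Type} [DecidableEq A]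
    (X : Fin N → A) (a : A) : ℝ :=
  ∑ ω, if X ω = a then p ω else 0

/-- Base-2 Shannon entropy of the random variable `X` under the pmf `p`. -/
noncomputable def ent {N : ℕ} (p : Fin N → ℝ) {A : Type} [Fintype A] [DecidableEq A]
    (X : Fin N → A) : ℝ :=
  -∑ a, pr p X a * Real.logb 2 (pr p X a)

/-- `p` is a probability mass function. -/
def IsDist {N : ℕ} (p : Fin N → ℝ) : Prop :=
  (∀ ω, 0 ≤ p ω) ∧ ∑ ω, p ω = 1

/-- The entropy vector of three finite-alphabet random variables, with components
(H(X₁), H(X₂), H(X₃), H(X₁X₂), H(X₁X₃), H(X₂X₃), H(X₁X₂X₃)). -/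
noncomputable def entVec3 {N a₁ a₂ a₃ : ℕ} (p : Fin N → ℝ)
    (X₁ : Fin N → Fin a₁) (X₂ : Fin N → Fin a₂) (X₃ : Fin N → Fin a₃) : Fin 7 → ℝ :=
  ![ent p X₁, ent p X₂, ent p X₃,
    ent p (fun ω => (X₁ ω, X₂ ω)),
    ent p (fun ω => (X₁ ω, X₃ ω)),
    ent p (fun ω => (X₂ ω, X₃ ω)),
    ent p (fun ω => (X₁ ω, X₂ ω, X₃ ω))]

/-- `h ∈ ℝ⁷` is the entropy vector of some triple of finite-alphabet random variables. -/
def IsEntropic (h : Fin 7 → ℝ) : Prop :=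
  ∃ (N a₁ a₂ a₃ : ℕ) (p : Fin N → ℝ)
    (X₁ : Fin N → Fin a₁) (X₂ : Fin N → Fin a₂) (X₃ : Fin N → Fin a₃),
    IsDist p ∧ entVec3 p X₁ X₂ X₃ = h

noncomputable def e1 : Fin 7 → ℝ := ![1,0,0,1,1,0,1]
noncomputable def e2 : Fin 7 → ℝ := ![0,1,0,1,0,1,1]
noncomputable def e3 : Fin 7 → ℝ := ![0,0,1,0,1,1,1]
noncomputable def e12 : Fin 7 → ℝ := ![1,1,0,1,1,1,1]
noncomputable def e13 : Fin 7 → ℝ := ![1,0,1,1,1,1,1]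
noncomputable def e23 : Fin 7 → ℝ := ![0,1,1,1,1,1,1]
noncomputable def e123 : Fin 7 → ℝ := ![1,1,1,1,1,1,1]
noncomputable def e123' : Fin 7 → ℝ := ![1,1,1,2,2,2,2]

noncomputable def zeta : ℝ :=
  (54:ℝ) ^ ((1:ℝ)/2) * (72:ℝ) ^ ((1:ℝ)/4) * (108:ℝ) ^ ((1:ℝ)/6) * (216:ℝ) ^ ((1:ℝ)/12)

noncomputable def g : Fin 7 → ℝ :=
  ![Real.logb 2 9, Real.logb 2 9, Real.logb 2 6, Real.logb 2 zeta,
    Real.logb 2 54, Real.logb 2 54, Real.logb 2 216]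

/-!
Writing `t = log₂ 3`, every coordinate of `g` is of the form `a + b t`, and the five vectors
`e₁, e₂, e₃, e₁₂, e₁₂₃'` are linearly independent, so the only representation of `g` has
coefficients `(2, 2, 7/6 + t/4, 5t/4 - 11/6, 3t/4 - 1/6)`. These are all positive because
`2²² < 3¹⁵`, i.e. `t > 22/15`. The coefficient of `e₁₂` is `h₁ + h₂ - h₁₂`, a functional vanishing
on `e₁, e₂, e₃, e₁₂₃'`, so the second and third claims are the positivity of that coefficient.
-/

open Real

lemma logb_two_three_gt : (22 : ℝ) / 15 < logb 2 3 := by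
  rw [lt_logb_iff_rpow_lt (by norm_num) (by norm_num)]
  by_contra! h
  have h15 : (3 : ℝ) ^ (15 : ℕ) ≤ ((2 : ℝ) ^ ((22 : ℝ) / 15)) ^ (15 : ℕ) :=
    pow_le_pow_left₀ (by norm_num) h 15
  rw [← rpow_natCast (2 ^ _) 15, ← rpow_mul (by norm_num)] at h15
  norm_num at h15

lemma logb_self_pow_mul_pow {b x : ℝ} (hb : 1 < b) (hx : 0 < x) (m n : ℕ) :
    logb b (b ^ m * x ^ n) = m + n * logb b x := by
  have hb₀ : 0 < b := zero_lt_one.trans hb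
  rw [logb_mul (by positivity) (by positivity), logb_pow, logb_pow, logb_self_eq_one hb, mul_one]

lemma logb_two_two_pow_mul_three_pow (m n : ℕ) :
    logb 2 (2 ^ m * 3 ^ n) = m + n * logb 2 3 :=
  logb_self_pow_mul_pow one_lt_two three_pos m n

lemma logb_two_zeta : logb 2 zeta = 11 / 6 + 11 / 4 * logb 2 3 := by
  have h54 := logb_two_two_pow_mul_three_pow 1 3
  have h72 := logb_two_two_pow_mul_three_pow 3 2
  have h108 := logb_two_two_pow_mul_three_pow 2 3
  have h216 := logb_two_two_pow_mul_three_pow 3 3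
  norm_num at h54 h72 h108 h216
  rw [zeta, logb_mul (by positivity) (by positivity), logb_mul (by positivity) (by positivity),
    logb_mul (by positivity) (by positivity), logb_rpow_eq_mul_logb_of_pos (by norm_num),
    logb_rpow_eq_mul_logb_of_pos (by norm_num), logb_rpow_eq_mul_logb_of_pos (by norm_num),
    logb_rpow_eq_mul_logb_of_pos (by norm_num), h54, h72, h108, h216]
  ring

lemma g_eq : g = ![2 * logb 2 3, 2 * logb 2 3, 1 + logb 2 3, 11 / 6 + 11 / 4 * logb 2 3,
    1 + 3 * logb 2 3, 1 + 3 * logb 2 3, 3 + 3 * logb 2 3] := by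
  have h9 := logb_two_two_pow_mul_three_pow 0 2
  have h6 := logb_two_two_pow_mul_three_pow 1 1
  have h54 := logb_two_two_pow_mul_three_pow 1 3
  have h216 := logb_two_two_pow_mul_three_pow 3 3
  norm_num at h9 h6 h54 h216
  rw [g, h9, h6, h54, h216, logb_two_zeta]

lemma coeffs_of_eq_combination {h : Fin 7 → ℝ} {c₁ c₂ c₃ c₁₂ c₁₂₃ : ℝ}
    (hh : h = c₁ • e1 + c₂ • e2 + c₃ • e3 + c₁₂ • e12 + c₁₂₃ • e123') :
    c₁ = h 6 - h 5 ∧ c₂ = h 6 - h 4 ∧ c₃ = h 6 - h 3 ∧ c₁₂ = h 0 + h 1 - h 3 ∧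
      c₁₂₃ = h 2 + h 3 - h 6 := by
  subst hh
  simp only [e1, e2, e3, e12, e123', Pi.add_apply, Pi.smul_apply, smul_eq_mul,
    Matrix.cons_val_zero, Matrix.cons_val_one, Matrix.cons_val]
  refine ⟨?_, ?_, ?_, ?_, ?_⟩ <;> ring

lemma apply_zero_add_apply_one_eq_of_eq_combination {h : Fin 7 → ℝ} {c₁ c₂ c₃ c₁₂₃ : ℝ}
    (hh : h = c₁ • e1 + c₂ • e2 + c₃ • e3 + c₁₂₃ • e123') : h 0 + h 1 = h 3 := by
  subst hh
  simp only [e1, e2, e3, e123', Pi.add_apply, Pi.smul_apply, smul_eq_mul,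
    Matrix.cons_val_zero, Matrix.cons_val_one, Matrix.cons_val]
  ring

/-- g is not a nonnegative combination of any proper subset of {e₁,e₂,e₃,e₁₂,e₁₂₃'}
(equivalently, every nonnegative representation has all five coefficients nonzero);
in particular it is not a nonnegative combination of e₁,e₂,e₃,e₁₂₃' alone, as it
violates h₁ + h₂ = h₁₂. -/
theorem stmt13 :
    (∀ c1 c2 c3 c12 c123 : ℝ, 0 ≤ c1 → 0 ≤ c2 → 0 ≤ c3 → 0 ≤ c12 → 0 ≤ c123 →
      g = c1 • e1 + c2 • e2 + c3 • e3 + c12 • e12 + c123 • e123' →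
      c1 ≠ 0 ∧ c2 ≠ 0 ∧ c3 ≠ 0 ∧ c12 ≠ 0 ∧ c123 ≠ 0) ∧
    (¬∃ c1 c2 c3 c4 : ℝ, 0 ≤ c1 ∧ 0 ≤ c2 ∧ 0 ≤ c3 ∧ 0 ≤ c4 ∧
      g = c1 • e1 + c2 • e2 + c3 • e3 + c4 • e123') ∧
    g 0 + g 1 ≠ g 3 := by
  have ht := logb_two_three_gt
  have hg : g 0 + g 1 ≠ g 3 := by
    simp only [g_eq, Matrix.cons_val_zero, Matrix.cons_val_one, Matrix.cons_val]
    linarith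
  refine ⟨fun c1 c2 c3 c12 c123 _ _ _ _ _ hrep => ?_, ?_, hg⟩
  · obtain ⟨h₁, h₂, h₃, h₁₂, h₁₂₃⟩ := coeffs_of_eq_combination hrep
    simp only [g_eq, Matrix.cons_val_zero, Matrix.cons_val_one, Matrix.cons_val] at h₁ h₂ h₃ h₁₂ h₁₂₃
    refine ⟨?_, ?_, ?_, ?_, ?_⟩ <;> apply ne_of_gt <;> linarith
  · rintro ⟨c1, c2, c3, c4, -, -, -, -, hrep⟩
    exact hg (apply_zero_add_apply_one_eq_of_eq_combination hrep)
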